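/- arXiv:2512.19462 — 2 statements merged into one kernel-verified Lean document; each statement's English description precedes it below -/
import Mathlib

section
/- Let π be a 132-avoiding permutation of length n, and for 0 ≤ i ≤ n let τ_i be the output of the insertion step at position i applied to π. Then the n+1 pairs (|τ_i|, short(τ_i)) are pairwise distinct, where short(σ) denotes the number of short values of σ; that is, the n+1 outputs of the insertion steps all belong to different sets A(m,s). -/
open List

attribute [local instance] Classical.propDecidable

/-- `l` is a permutation of length `n`, i.e. a list containing each of `1,…,n` exactly once. -/
def IsPermList (n : ℕ) (l : List ℕ) : Prop :=
  l.Perm (List.range' 1 n)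

/-- Two sequences (with distinct entries) are order-isomorphic: same length and the same
pairwise order relations. -/
def OrderIsoList (a b : List ℕ) : Prop :=
  a.length = b.length ∧
    ∀ i j, i < j → j < a.length →
      (a.getD i 0 < a.getD j 0 ↔ b.getD i 0 < b.getD j 0)

/-- `l` contains the pattern `p`: some subsequence of `l` is order-isomorphic to `p`. -/
def ContainsPat (l p : List ℕ) : Prop :=
  ∃ s, s.Sublist l ∧ OrderIsoList s p

/-- `l` avoids the pattern `p`. -/
def AvoidsPat (l p : List ℕ) : Prop := ¬ ContainsPat l p

/-- Relabel the entries of a list of distinct naturals order-isomorphically with `1,…,m`. -/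
def standardize (l : List ℕ) : List ℕ :=
  l.map fun x => (l.filter fun y => y ≤ x).length

/-- Insert the new maximum value `l.length + 1` immediately after the first `i` entries. -/
def insertMax (l : List ℕ) (i : ℕ) : List ℕ :=
  l.take i ++ (l.length + 1) :: l.drop i

/-- The insertion step at position `i` for the pattern `p`: insert a new maximum after the
first `i` entries, keep the longest prefix avoiding `p` (i.e. remove the minimal suffix so
that the result avoids `p`), then standardize. -/
noncomputable def insStep (p l : List ℕ) (i : ℕ) : List ℕ :=
  standardize ((insertMax l i).take
    (Nat.findGreatest (fun k => AvoidsPat ((insertMax l i).take k) p)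
      (insertMax l i).length))

/-- The entry at (0-indexed) position `i` of `l` is a right-to-left maximum: it is larger
than every entry to its right. -/
def IsRLMax (l : List ℕ) (i : ℕ) : Prop :=
  ∀ j, i < j → j < l.length → l.getD j 0 < l.getD i 0

/-- The number of short values of `l`: entries that are not right-to-left maxima. -/
noncomputable def shortCount (l : List ℕ) : ℕ :=
  {i | i < l.length ∧ ¬ IsRLMax l i}.ncard

/-!
A copy of 132 in `P, n+1, π_{i+1}, …` (with `P` the first `i` entries of `π`) must use `n+1` as
its `3`, so the prefix kept by the insertion step at `i` is `P, n+1, T` with `T` a segment of `π`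
following `P` whose entries all lie below those of `P`. Hence `τ_i` has length `i + 1 + |T|` and
`i + short(T)` short values: the entries of `P` are short and `n+1` is not.
If `i < j` give the same length, then `T_i = F ++ T_j` with `F = π_{i+1} … π_j` nonempty and
lying entirely above `T_j`, so the maximum of `F` is a right-to-left maximum of `T_i`. Thus
`short(T_i) < |F| + short(T_j)`, i.e. `τ_i` has fewer short values than `τ_j`.
-/

lemma length_standardize (l : List ℕ) : (standardize l).length = l.length :=
  length_map _

lemma length_filter_le_mono (l : List ℕ) {a b : ℕ} (hab : a ≤ b) :
    (l.filter (· ≤ a)).length ≤ (l.filter (· ≤ b)).length := by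
  simp only [← countP_eq_length_filter]
  exact countP_mono_left fun x _ hx => by simp only [decide_eq_true_eq] at hx ⊢; omega

lemma length_filter_le_lt_iff {l : List ℕ} {a b : ℕ} (hb : b ∈ l) :
    (l.filter (· ≤ a)).length < (l.filter (· ≤ b)).length ↔ a < b := by
  refine ⟨fun h => lt_of_not_ge fun hba => h.not_ge (length_filter_le_mono l hba),
    fun hab => ?_⟩
  have hfilter : l.filter (· ≤ a) = (l.filter (· ≤ b)).filter (· ≤ a) := by
    rw [filter_filter]
    congr 1
    funext x
    by_cases hxa : x ≤ a
    · simp [hxa, hxa.trans hab.le]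
    · simp [hxa]
  rw [hfilter]
  exact length_filter_lt_length_iff_exists.mpr
    ⟨b, mem_filter.mpr ⟨hb, by simp⟩, by simpa using hab⟩

lemma getD_standardize_lt_iff {l : List ℕ} {i j : ℕ} (hi : i < l.length) (hj : j < l.length) :
    (standardize l).getD i 0 < (standardize l).getD j 0 ↔ l.getD i 0 < l.getD j 0 := by
  simp only [standardize, getD_eq_getElem?_getD, getElem?_map, getElem?_eq_getElem hi,
    getElem?_eq_getElem hj, Option.map_some, Option.getD_some]
  exact length_filter_le_lt_iff (getElem_mem hj)

lemma isRLMax_standardize_iff {l : List ℕ} {k : ℕ} :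
    IsRLMax (standardize l) k ↔ IsRLMax l k := by
  simp only [IsRLMax, length_standardize]
  exact forall_congr' fun j => imp_congr_right fun hkj => imp_congr_right fun hjl =>
    getD_standardize_lt_iff hjl (hkj.trans hjl)

lemma shortCount_standardize (l : List ℕ) : shortCount (standardize l) = shortCount l := by
  simp only [shortCount, length_standardize, isRLMax_standardize_iff]

lemma shortCount_eq_sum (l : List ℕ) :
    shortCount l = ∑ k ∈ Finset.range l.length, if IsRLMax l k then 0 else 1 := by
  have hset : {i | i < l.length ∧ ¬ IsRLMax l i} =
      ↑((Finset.range l.length).filter fun k => ¬ IsRLMax l k) := by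
    ext k
    simp
  rw [shortCount, hset, Set.ncard_coe_finset, Finset.card_filter]
  exact Finset.sum_congr rfl fun k _ => by split_ifs <;> rfl

lemma isRLMax_cons_zero_iff {x : ℕ} {l : List ℕ} :
    IsRLMax (x :: l) 0 ↔ ∀ y ∈ l, y < x := by
  simp only [IsRLMax, length_cons, mem_iff_getElem]
  constructor
  · rintro h y ⟨j, hj, rfl⟩
    simpa [getElem?_eq_getElem hj] using h (j + 1) (by omega) (by omega)
  · rintro h (_ | j) hj hjl
    · omega
    · simpa [getElem?_eq_getElem (Nat.succ_lt_succ_iff.mp hjl)] using h _ ⟨j, _, rfl⟩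

lemma isRLMax_cons_succ_iff {x : ℕ} {l : List ℕ} {k : ℕ} :
    IsRLMax (x :: l) (k + 1) ↔ IsRLMax l k := by
  simp only [IsRLMax, length_cons]
  constructor
  · intro h j hkj hjl
    simpa using h (j + 1) (by omega) (by omega)
  · rintro h (_ | j) hkj hjl
    · omega
    · simpa using h j (by omega) (by omega)

lemma shortCount_cons (x : ℕ) (l : List ℕ) :
    shortCount (x :: l) = (if ∀ y ∈ l, y < x then 0 else 1) + shortCount l := by
  simp only [shortCount_eq_sum, length_cons, Finset.sum_range_succ', isRLMax_cons_succ_iff,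
    isRLMax_cons_zero_iff]
  omega

lemma shortCount_append_of_forall_exists_lt {F B : List ℕ} (h : ∀ x ∈ F, ∃ y ∈ B, x < y) :
    shortCount (F ++ B) = F.length + shortCount B := by
  induction F with
  | nil => simp
  | cons a F ih =>
    obtain ⟨y, hyB, hay⟩ := h a mem_cons_self
    have hnot : ¬ ∀ z ∈ F ++ B, z < a := fun hall => by
      have := hall y (mem_append_right _ hyB)
      omega
    rw [cons_append, shortCount_cons, if_neg hnot, ih fun x hx => h x (mem_cons_of_mem _ hx),
      length_cons]
    omega

lemma shortCount_append_cons_of_forall_lt {P T : List ℕ} {m : ℕ} (hP : ∀ x ∈ P, x < m)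
    (hT : ∀ y ∈ T, y < m) : shortCount (P ++ m :: T) = P.length + shortCount T := by
  rw [shortCount_append_of_forall_exists_lt fun x hx => ⟨m, mem_cons_self, hP x hx⟩,
    shortCount_cons, if_pos hT, zero_add]

lemma shortCount_append_lt {F B : List ℕ} (hF : F ≠ []) (h : ∀ x ∈ F, ∀ y ∈ B, y < x) :
    shortCount (F ++ B) < F.length + shortCount B := by
  induction F with
  | nil => exact absurd rfl hF
  | cons a F ih =>
    rw [cons_append, shortCount_cons, length_cons]
    rcases eq_or_ne F [] with rfl | hF'
    · rw [nil_append, if_pos (h a mem_cons_self)]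
      simp
    · have := ih hF' fun x hx => h x (mem_cons_of_mem _ hx)
      split <;> omega

lemma AvoidsPat.sublist {s l p : List ℕ} (h : AvoidsPat l p) (hsl : s <+ l) : AvoidsPat s p :=
  fun ⟨t, ht, hiso⟩ => h ⟨t, ht.trans hsl, hiso⟩

lemma containsPat_132_of_sublist {l : List ℕ} {a b c : ℕ} (hs : [a, b, c] <+ l)
    (hac : a < c) (hcb : c < b) : ContainsPat l [1, 3, 2] := by
  refine ⟨[a, b, c], hs, rfl, fun i j hij hj => ?_⟩
  simp only [length_cons, length_nil] at hj
  interval_cases j <;> interval_cases i <;> simp [getD] <;> omega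

lemma exists_sublist_of_containsPat_132 {l : List ℕ} (hl : l.Nodup)
    (h : ContainsPat l [1, 3, 2]) : ∃ a b c, [a, b, c] <+ l ∧ a < c ∧ c < b := by
  obtain ⟨s, hs, hlen, hrel⟩ := h
  obtain ⟨a, b, c, rfl⟩ : ∃ a b c, s = [a, b, c] := by
    match s, hlen with
    | [a, b, c], _ => exact ⟨a, b, c, rfl⟩
  have hac : a < c := by simpa [getD] using (hrel 0 2 (by omega) (by simp)).mpr (by simp [getD])
  have hcb : c ≤ b := by simpa [getD] using (hrel 1 2 (by omega) (by simp)).not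
  have hbc : b ≠ c := by
    have := hs.nodup hl
    simp_all
  exact ⟨a, b, c, hs, hac, lt_of_le_of_ne hcb hbc.symm⟩

lemma mem_and_mem_of_sublist_append_cons {P T : List ℕ} {a m c : ℕ} (hP : m ∉ P)
    (hT : m ∉ T) (h : [a, m, c] <+ P ++ m :: T) : a ∈ P ∧ c ∈ T := by
  obtain ⟨l₁, l₂, he, h₁, h₂⟩ := sublist_append_iff.mp h
  rcases l₁ with _ | ⟨x, _ | ⟨y, l₁⟩⟩
  · subst he
    rcases sublist_cons_iff.mp h₂ with h₂ | ⟨r, hr, h₂⟩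
    · exact absurd (h₂.subset (by simp)) hT
    · simp only [cons.injEq] at hr
      exact absurd (h₂.subset (by simp [← hr.2])) hT
  · simp only [cons_append, nil_append, cons.injEq] at he
    obtain ⟨rfl, rfl⟩ := he
    exact ⟨h₁.subset mem_cons_self, (cons_sublist_cons.mp h₂).subset mem_cons_self⟩
  · simp only [cons_append, cons.injEq] at he
    obtain ⟨-, rfl, -⟩ := he
    exact absurd (h₁.subset (by simp)) hP

lemma avoidsPat_132_append_cons {P T : List ℕ} {m : ℕ} (hPT : AvoidsPat (P ++ T) [1, 3, 2])
    (hnd : (P ++ T).Nodup) (hm : ∀ x ∈ P ++ T, x < m) (hTP : ∀ y ∈ T, ∀ x ∈ P, y < x) :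
    AvoidsPat (P ++ m :: T) [1, 3, 2] := by
  have hmPT : m ∉ P ++ T := fun h => lt_irrefl m (hm m h)
  have hmP : m ∉ P := fun h => hmPT (mem_append_left _ h)
  have hmT : m ∉ T := fun h => hmPT (mem_append_right _ h)
  have hle : ∀ x ∈ P ++ m :: T, x ≤ m := by
    intro x hx
    rw [mem_append, mem_cons] at hx
    rcases hx with hx | rfl | hx
    exacts [(hm x (mem_append_left _ hx)).le, le_rfl, (hm x (mem_append_right _ hx)).le]
  intro hcon
  obtain ⟨a, b, c, hs, hac, hcb⟩ :=
    exists_sublist_of_containsPat_132 (nodup_middle.mpr (nodup_cons.mpr ⟨hmPT, hnd⟩)) hcon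
  by_cases hb : b = m
  · subst hb
    obtain ⟨haP, hcT⟩ := mem_and_mem_of_sublist_append_cons hmP hmT hs
    exact absurd (hTP c hcT a haP) (by omega)
  · have hc := hle c (hs.subset (by simp))
    have hb' := hle b (hs.subset (by simp))
    have hmabc : m ∉ [a, b, c] := by simp; omega
    have hsPT := hs.erase m
    rw [erase_of_not_mem hmabc, erase_append_right _ hmP, erase_cons_head] at hsPT
    exact hPT (containsPat_132_of_sublist hsPT hac hcb)

lemma lt_of_avoidsPat_132_append_cons {P T : List ℕ} {m x y : ℕ}
    (h : AvoidsPat (P ++ m :: T) [1, 3, 2]) (hx : x ∈ P) (hy : y ∈ T) (hxy : x ≠ y)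
    (hym : y < m) : y < x := by
  by_contra hyx
  exact h (containsPat_132_of_sublist
    ((singleton_sublist.mpr hx).append ((singleton_sublist.mpr hy).cons_cons m)) (by omega) hym)

namespace IsPermList

variable {n : ℕ} {π : List ℕ}

lemma length_eq (h : IsPermList n π) : π.length = n := by
  simpa using List.Perm.length_eq h

lemma nodup (h : IsPermList n π) : π.Nodup :=
  h.nodup_iff.mpr nodup_range'

lemma lt_of_mem (h : IsPermList n π) {x : ℕ} (hx : x ∈ π) : x < n + 1 := by
  have := mem_range'_1.mp (List.Perm.mem_iff h |>.mp hx)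
  omega

end IsPermList

lemma take_insertMax (π : List ℕ) {i : ℕ} (hi : i ≤ π.length) (t : ℕ) :
    (insertMax π i).take (i + 1 + t) = π.take i ++ (π.length + 1) :: (π.drop i).take t := by
  rw [insertMax, show i + 1 + t = (π.take i).length + (t + 1) by simp; omega,
    take_length_add_append, take_succ_cons]

lemma exists_insStep_132_eq {n : ℕ} {π : List ℕ} (h : IsPermList n π)
    (ha : AvoidsPat π [1, 3, 2]) {i : ℕ} (hi : i ≤ n) :
    ∃ t, i + t ≤ n ∧
      insStep [1, 3, 2] π i = standardize (π.take i ++ (n + 1) :: (π.drop i).take t) ∧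
      ∀ y ∈ (π.drop i).take t, ∀ x ∈ π.take i, y < x := by
  have hlen := h.length_eq
  set K := Nat.findGreatest (fun k => AvoidsPat ((insertMax π i).take k) [1, 3, 2])
    (insertMax π i).length
  have hlenI : (insertMax π i).length = n + 1 := by simp [insertMax, hlen]; omega
  have hprefix : AvoidsPat ((insertMax π i).take (i + 1 + 0)) [1, 3, 2] := by
    rw [take_insertMax π (hlen ▸ hi), take_zero, hlen]
    exact avoidsPat_132_append_cons (by simpa using ha.sublist (take_sublist i π))
      (by simpa using h.nodup.sublist (take_sublist i π))
      (fun x hx => h.lt_of_mem (take_subset i π (by simpa using hx))) (by simp)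
  have hiK : i + 1 ≤ K := Nat.le_findGreatest (by omega) hprefix
  have hKn : K ≤ n + 1 := hlenI ▸ Nat.findGreatest_le _
  have hKavoid : AvoidsPat ((insertMax π i).take K) [1, 3, 2] :=
    Nat.findGreatest_spec (P := fun k => AvoidsPat ((insertMax π i).take k) [1, 3, 2])
      (by omega) hprefix
  have hKt : K = i + 1 + (K - (i + 1)) := by omega
  rw [hKt, take_insertMax π (hlen ▸ hi), hlen] at hKavoid
  refine ⟨K - (i + 1), by omega, ?_, ?_⟩
  · change standardize ((insertMax π i).take K) = _
    conv_lhs => rw [hKt, take_insertMax π (hlen ▸ hi), hlen]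
  · intro y hy x hx
    have hyπ : y ∈ π := drop_subset i π (take_subset _ _ hy)
    exact lt_of_avoidsPat_132_append_cons hKavoid hx hy
      (fun hxy => disjoint_take_drop h.nodup le_rfl hx (hxy ▸ take_subset _ _ hy))
      (h.lt_of_mem hyπ)

lemma shortCount_insStep_132_lt {n : ℕ} {π : List ℕ} (h : IsPermList n π)
    (ha : AvoidsPat π [1, 3, 2]) {i j : ℕ} (hij : i < j) (hj : j ≤ n)
    (hlen : (insStep [1, 3, 2] π i).length = (insStep [1, 3, 2] π j).length) :
    shortCount (insStep [1, 3, 2] π i) < shortCount (insStep [1, 3, 2] π j) := by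
  obtain ⟨tᵢ, htᵢ, hτᵢ, -⟩ := exists_insStep_132_eq h ha (hij.le.trans hj)
  obtain ⟨tⱼ, htⱼ, hτⱼ, hbelow⟩ := exists_insStep_132_eq h ha hj
  have hπlen := h.length_eq
  have hshort : ∀ {k t}, k ≤ n →
      shortCount (standardize (π.take k ++ (n + 1) :: (π.drop k).take t)) =
        k + shortCount ((π.drop k).take t) := by
    intro k t hk
    rw [shortCount_standardize, shortCount_append_cons_of_forall_lt
      (fun x hx => h.lt_of_mem (take_subset _ _ hx))
      (fun y hy => h.lt_of_mem (drop_subset _ _ (take_subset _ _ hy))), length_take]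
    omega
  rw [hτᵢ, hτⱼ, length_standardize, length_standardize] at hlen
  simp only [length_append, length_take, length_cons, length_drop, hπlen] at hlen
  have htt : tᵢ = (j - i) + tⱼ := by omega
  set F := (π.drop i).take (j - i) with hF
  have hsplit : (π.drop i).take tᵢ = F ++ (π.drop j).take tⱼ := by
    rw [htt, take_add, drop_drop, Nat.add_sub_cancel' hij.le]
  have hFj : ∀ x ∈ F, x ∈ π.take j := by
    intro x hx
    rw [show j = i + (j - i) by omega, take_add]
    exact mem_append_right _ hx
  have hFlen : F.length = j - i := by simp only [hF, length_take, length_drop, hπlen]; omega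
  have hlt := shortCount_append_lt (ne_nil_of_length_pos (by omega))
    fun x hx y hy => hbelow y hy x (hFj x hx)
  rw [hτᵢ, hτⱼ, hshort (hij.le.trans hj), hshort hj, hsplit]
  omega

/-- For a 132-avoiding permutation `π` of length `n`, the `n+1` outputs of the insertion
steps all have pairwise distinct pairs (length, number of short values); i.e. they all lie
in different sets `A(m,s)`. -/
theorem insStep_classes_distinct (n : ℕ) (π : List ℕ)
    (h : IsPermList n π) (ha : AvoidsPat π [1, 3, 2]) :
    ∀ i j, i ≤ n → j ≤ n →
      ((insStep [1, 3, 2] π i).length, shortCount (insStep [1, 3, 2] π i)) =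
        ((insStep [1, 3, 2] π j).length, shortCount (insStep [1, 3, 2] π j)) →
      i = j := by
  intro i j hi hj heq
  simp only [Prod.mk.injEq] at heq
  rcases lt_trichotomy i j with hij | rfl | hij
  · exact absurd heq.2 (shortCount_insStep_132_lt h ha hij hj heq.1).ne
  · rfl
  · exact absurd heq.2.symm (shortCount_insStep_132_lt h ha hij hi heq.1.symm).ne
end

section
/- Let π be a 132-avoiding permutation of length n ≥ 2 whose last entry is 1, and let π̂ be the standardization of π with its last entry removed (a 132-avoiding permutation of length n−1). If 0 ≤ i ≤ n−1 and the insertion step at position i applied to π removes at least one entry, then the output of the insertion step at position i applied to π equals the output of the insertion step at position i applied to π̂. -/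
open List

attribute [local instance] Classical.propDecidable

/-!
Write `π = σ.map succ ++ [1]` with `σ` the standardization of `π.dropLast`, so that
`insertMax π i = (insertMax σ i).map succ ++ [1]`. The trailing `1` comes last and is the smallest
entry, whereas the last letter of an occurrence of `132` exceeds its first; so the occurrence of
`132` in `insertMax π i` already lies in `(insertMax σ i).map succ`, and the longest `132`-avoiding
prefix never reaches the trailing `1`. What remains is a shift by the order embedding `succ`, which
neither pattern containment nor standardization notices.
-/

noncomputable def longestAvoidingPrefix (p L : List ℕ) : List ℕ :=
  L.take (Nat.findGreatest (fun k => AvoidsPat (L.take k) p) L.length)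

lemma insStep_eq_standardize_longestAvoidingPrefix (p l : List ℕ) (i : ℕ) :
    insStep p l i = standardize (longestAvoidingPrefix p (insertMax l i)) :=
  rfl

lemma ContainsPat.mono {l₁ l₂ p : List ℕ} (h : ContainsPat l₁ p) (hl : l₁ <+ l₂) :
    ContainsPat l₂ p :=
  let ⟨s, hs, hiso⟩ := h
  ⟨s, hs.trans hl, hiso⟩

lemma orderIsoList_map_iff {f : ℕ → ℕ} (hf : StrictMono f) {s p : List ℕ} :
    OrderIsoList (s.map f) p ↔ OrderIsoList s p := by
  have hget : ∀ i < s.length, (s.map f).getD i 0 = f (s.getD i 0) := by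
    intro i hi
    simp [hi]
  unfold OrderIsoList
  rw [length_map]
  refine and_congr_right fun _ => forall₂_congr fun i j =>
    imp_congr_right fun hij => imp_congr_right fun hj => ?_
  rw [hget i (hij.trans hj), hget j hj, hf.lt_iff_lt]

lemma containsPat_map_iff {f : ℕ → ℕ} (hf : StrictMono f) {l p : List ℕ} :
    ContainsPat (l.map f) p ↔ ContainsPat l p := by
  constructor
  · rintro ⟨_, hsub, hiso⟩
    obtain ⟨s, hs, rfl⟩ := sublist_map_iff.mp hsub
    exact ⟨s, hs, (orderIsoList_map_iff hf).mp hiso⟩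
  · rintro ⟨s, hs, hiso⟩
    exact ⟨s.map f, hs.map f, (orderIsoList_map_iff hf).mpr hiso⟩

lemma longestAvoidingPrefix_map {f : ℕ → ℕ} (hf : StrictMono f) (p L : List ℕ) :
    longestAvoidingPrefix p (L.map f) = (longestAvoidingPrefix p L).map f := by
  simp only [longestAvoidingPrefix, length_map, ← map_take, AvoidsPat, containsPat_map_iff hf]
  congr

lemma List.IsPrefix.longestAvoidingPrefix_eq {p L' L : List ℕ} (hpre : L' <+: L)
    (h : ContainsPat L' p) : longestAvoidingPrefix p L' = longestAvoidingPrefix p L := by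
  obtain ⟨m, rfl⟩ : ∃ m, L' = L.take m := ⟨_, prefix_iff_eq_take.mp hpre⟩
  rcases le_or_gt L.length m with hm | hm
  · rw [take_of_length_le hm]
  have htake : ∀ k ≤ m, (L.take m).take k = L.take k := fun k hk => by
    rw [take_take, Nat.min_eq_left hk]
  unfold longestAvoidingPrefix
  set g := Nat.findGreatest (fun k => AvoidsPat ((L.take m).take k) p) (L.take m).length
  have hlen : (L.take m).length = m := length_take_of_le hm.le
  have hgm : g ≤ m := hlen ▸ Nat.findGreatest_le _
  suffices Nat.findGreatest (fun k => AvoidsPat (L.take k) p) L.length = g by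
    rw [this, htake g hgm]
  rw [Nat.findGreatest_eq_iff]
  refine ⟨hgm.trans hm.le, fun hg => htake g hgm ▸ Nat.findGreatest_of_ne_zero rfl hg,
    fun k hgk hkL => ?_⟩
  rcases le_or_gt k m with hkm | hkm
  · rw [← htake k hkm]
    exact Nat.findGreatest_is_greatest hgk (hkm.trans_eq hlen.symm)
  · exact fun hav => hav (h.mono ((take_prefix_take_left hkm.le).sublist))

lemma containsPat_132_iff (l : List ℕ) :
    ContainsPat l [1, 3, 2] ↔ ∃ a b c, [a, b, c] <+ l ∧ a < c ∧ c ≤ b := by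
  constructor
  · rintro ⟨s, hs, hlen, hiso⟩
    obtain ⟨a, b, c, rfl⟩ := length_eq_three.mp hlen
    have hac := hiso 0 2 (by norm_num) (by simp)
    have hbc := hiso 1 2 (by norm_num) (by simp)
    exact ⟨a, b, c, hs, by simpa using hac, by simpa using hbc⟩
  · rintro ⟨a, b, c, hs, hac, hcb⟩
    refine ⟨[a, b, c], hs, rfl, fun i j hij hj => ?_⟩
    simp only [length_cons, length_nil] at hj
    interval_cases j <;> interval_cases i <;> simp <;> omega

lemma containsPat_132_of_append_singleton {l : List ℕ} {x : ℕ}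
    (h : ContainsPat (l ++ [x]) [1, 3, 2]) (hx : ∀ y ∈ l, x ≤ y) : ContainsPat l [1, 3, 2] := by
  obtain ⟨a, b, c, hs, hac, hcb⟩ := (containsPat_132_iff _).mp h
  refine (containsPat_132_iff l).mpr ⟨a, b, c, ?_, hac, hcb⟩
  obtain ⟨s₁, s₂, hs, h₁, h₂⟩ := sublist_append_iff.mp hs
  rcases sublist_singleton.mp h₂ with rfl | rfl
  · simpa [hs] using h₁
  · have hcx : c = x := by simpa using congrArg getLast? hs
    have ha : a ∈ s₁ ++ [x] := hs ▸ mem_cons_self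
    rcases mem_append.mp ha with ha | ha
    · exact absurd (hx a (h₁.subset ha)) (by omega)
    · exact absurd (mem_singleton.mp ha) (by omega)

lemma standardize_map {f : ℕ → ℕ} (hf : StrictMono f) (l : List ℕ) :
    standardize (l.map f) = standardize l := by
  simp only [standardize, map_map, filter_map, length_map, Function.comp_def, hf.le_iff_le]

lemma countP_le_range' {k m x : ℕ} (hx : x ∈ range' (k + 1) m) :
    (range' (k + 1) m).countP (· ≤ x) = x - k := by
  rw [mem_range'_1] at hx
  rw [← Nat.add_sub_of_le (show x - k ≤ m by omega), ← range'_append, countP_append,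
    countP_eq_length.mpr, countP_eq_zero.mpr, length_range', Nat.add_zero]
  all_goals
    intro a ha
    rw [mem_range'_1] at ha
    simp only [decide_eq_true_eq]
    omega

lemma standardize_eq_map_sub_of_perm {l : List ℕ} {k m : ℕ} (h : l ~ range' (k + 1) m) :
    standardize l = l.map (· - k) :=
  map_congr_left fun x hx => by
    rw [← countP_eq_length_filter, h.countP_eq, countP_le_range' (h.subset hx)]

lemma eq_map_succ_standardize_dropLast_append {n : ℕ} {π : List ℕ} (h : IsPermList n π)
    (hlast : π.getLast? = some 1) : π = (standardize π.dropLast).map Nat.succ ++ [1] := by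
  have hsplit : π.dropLast ++ [1] = π := dropLast_append_getLast? 1 hlast
  obtain _ | m := n
  · simp [perm_nil.mp h] at hlast
  have hperm : π.dropLast ~ range' (1 + 1) m := by
    refine ((perm_append_singleton 1 _).symm.trans ?_).cons_inv
    rw [hsplit, ← range'_succ]
    exact h
  rw [standardize_eq_map_sub_of_perm hperm, map_map]
  conv_lhs => rw [← hsplit]
  congr 1
  refine (map_congr_left fun x hx => ?_).trans (map_id _) |>.symm
  have := mem_range'_1.mp (hperm.subset hx)
  simp only [Function.comp_apply, id, Nat.succ_eq_add_one]
  omega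

lemma insertMax_map_succ_append {l : List ℕ} {i : ℕ} (hi : i ≤ l.length) (x : ℕ) :
    insertMax (l.map Nat.succ ++ [x]) i = (insertMax l i).map Nat.succ ++ [x] := by
  have hi' : i ≤ (l.map Nat.succ).length := by rwa [length_map]
  simp [insertMax, take_append_of_le_length hi', drop_append_of_le_length hi', map_take, map_drop]

theorem insStep_dropLast_general (n : ℕ) (π : List ℕ)
    (h : IsPermList n π) (hlast : π.getLast? = some 1)
    (i : ℕ) (hi : i ≤ n - 1) (hrem : ContainsPat (insertMax π i) [1, 3, 2]) :
    insStep [1, 3, 2] π i = insStep [1, 3, 2] (standardize π.dropLast) i := by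
  have hsucc : StrictMono Nat.succ := fun _ _ => Nat.succ_lt_succ
  set σ := standardize π.dropLast
  have hσ : σ.length = n - 1 := by simp [σ, standardize, h.length_eq]
  have hins : insertMax π i = (insertMax σ i).map Nat.succ ++ [1] := by
    conv_lhs => rw [eq_map_succ_standardize_dropLast_append h hlast]
    exact insertMax_map_succ_append (hσ ▸ hi) 1
  have hcut : ContainsPat ((insertMax σ i).map Nat.succ) [1, 3, 2] :=
    containsPat_132_of_append_singleton (hins ▸ hrem) (by simp)
  rw [insStep_eq_standardize_longestAvoidingPrefix, insStep_eq_standardize_longestAvoidingPrefix,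
    hins, ← (prefix_append _ _).longestAvoidingPrefix_eq hcut,
    longestAvoidingPrefix_map hsucc, standardize_map hsucc]

/-- Let `π` be a 132-avoiding permutation of length `n ≥ 2` whose last entry is `1`, and
let `π̂` be the standardization of `π` with its last entry removed.  If `0 ≤ i ≤ n - 1`
and the insertion step at position `i` applied to `π` removes at least one entry, then the
insertion steps at position `i` applied to `π` and to `π̂` have the same output. -/
theorem insStep_dropLast (n : ℕ) (π : List ℕ) (hn : 2 ≤ n)
    (h : IsPermList n π) (ha : AvoidsPat π [1, 3, 2]) (hlast : π.getLast? = some 1)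
    (i : ℕ) (hi : i ≤ n - 1) (hrem : ContainsPat (insertMax π i) [1, 3, 2]) :
    insStep [1, 3, 2] π i = insStep [1, 3, 2] (standardize π.dropLast) i :=
  insStep_dropLast_general n π h hlast i hi hrem
end
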